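/- If a local groupoid G is globally associative (for every n ≥ 3 and every composable n-tuple, all defined n-fold products obtained by different bracketings are equal) and satisfies the inverse-decomposition property, then the completion map G → AC(G) is injective. Conversely, if the completion map G → AC(G) is injective then G is globally associative. -/

import Mathlib

/-- An (algebraic) local groupoid over a base `M`: a set of arrows `G` with source,
target, unit, a partially defined multiplication (with domain `D`) satisfying the
unit laws and 3-associativity wherever defined. -/
structure LocalGroupoid (G : Type*) (M : Type*) where
  s : G → M
  t : G → M
  unit : M → G
  s_unit : ∀ x, s (unit x) = x
  t_unit : ∀ x, t (unit x) = x
  /-- the domain of the multiplication -/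
  D : G → G → Prop
  D_st : ∀ {g h}, D g h → s g = t h
  mul : G → G → G
  D_unit_right : ∀ g, D g (unit (s g))
  D_unit_left : ∀ g, D (unit (t g)) g
  s_mul : ∀ {g h}, D g h → s (mul g h) = s h
  t_mul : ∀ {g h}, D g h → t (mul g h) = t g
  mul_unit_right : ∀ g, mul g (unit (s g)) = g
  unit_mul : ∀ g, mul (unit (t g)) g = g
  assoc3 : ∀ {g h k}, D g h → D (mul g h) k → D h k → D g (mul h k) →
    mul (mul g h) k = mul g (mul h k)

namespace LocalGroupoid

variable {G : Type*} {M : Type*} (L : LocalGroupoid G M)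

/-- A well-formed word: a nonempty list `(w₁, …, wₙ)` of arrows with
`s wᵢ = t wᵢ₊₁`. -/
def WFWord (w : List G) : Prop := w ≠ [] ∧ w.Chain' (fun a b => L.s a = L.t b)

/-- An elementary contraction of words: replace an adjacent pair whose product is
defined by the product. -/
inductive Contr : List G → List G → Prop
  | mk (p q : List G) {g h : G} (hD : L.D g h) :
      Contr (p ++ g :: h :: q) (p ++ L.mul g h :: q)

/-- The equivalence relation on words generated by contractions and expansions. -/
def WordEquiv : List G → List G → Prop := Relation.EqvGen L.Contr

/-- `ContractsTo w v`: `v` is obtained from `w` by a finite sequence of contractions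
(equivalently, `w` is obtained from `v` by expansions, i.e. `v ≤ w`). -/
def ContractsTo : List G → List G → Prop := Relation.ReflTransGen L.Contr

/-- The type of well-formed words. -/
def Word := {w : List G // L.WFWord w}

instance wordSetoid : Setoid L.Word :=
  ⟨fun a b => L.WordEquiv a.1 b.1, by
    constructor
    · exact fun a => Relation.EqvGen.refl _
    · exact fun h => Relation.EqvGen.symm _ _ h
    · exact fun h1 h2 => Relation.EqvGen.trans _ _ _ h1 h2⟩

/-- The associative completion of a local groupoid: well-formed words modulo
contractions and expansions. -/
def AC := Quotient L.wordSetoid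

/-- The one-letter word `(g)`. -/
def singletonWord (g : G) : L.Word := ⟨[g], by simp [WFWord, List.Chain']⟩

/-- The completion map `G → AC(G)`. -/
def completion (g : G) : L.AC := Quotient.mk _ (L.singletonWord g)

/-- Target of a well-formed word: the target of its first letter. -/
def wordTgt (w : L.Word) : M := L.t (w.1.head w.2.1)

/-- Source of a well-formed word: the source of its last letter. -/
def wordSrc (w : L.Word) : M := L.s (w.1.getLast w.2.1)

/-- `b` is a two-sided inverse of `a`. -/
def InvPair (a b : G) : Prop :=
  L.D a b ∧ L.D b a ∧ L.mul a b = L.unit (L.t a) ∧ L.mul b a = L.unit (L.s a)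

/-- An arrow is invertible if it has a two-sided inverse. -/
def Invertible (a : G) : Prop := ∃ b, L.InvPair a b

/-- `LProd as seed r`: `r = a₁ (a₂ (⋯ (aₖ seed)))` where `as = [a₁, …, aₖ]`, all
products being defined. -/
inductive LProd : List G → G → G → Prop
  | nil (g : G) : LProd [] g g
  | cons {as : List G} {g p : G} (a : G) : LProd as g p → L.D a p → LProd (a :: as) g (L.mul a p)

/-- `RProd seed bs r`: `r = ((⋯((seed b₁) b₂)⋯) bₖ)` where `bs = [b₁, …, bₖ]`, all
products being defined. -/
inductive RProd : G → List G → G → Prop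
  | nil (g : G) : RProd g [] g
  | cons {bs : List G} {g r : G} (b : G) (hD : L.D g b) : RProd (L.mul g b) bs r → RProd g (b :: bs) r

/-- The inverse-decomposition property: every composable pair `(g,h)` decomposes
through invertible elements, either on the left:
`g = aₗ(⋯(a₂ a₁))` and `h = a₁⁻¹(⋯(aₗ⁻¹ (gh)))`, or on the right:
`h = ((b₁ b₂)⋯)bₘ` and `g = (((gh) bₘ⁻¹)⋯) b₁⁻¹`. -/
def InvDecomp : Prop :=
  ∀ g h, L.D g h →
    (∃ a : List (G × G), (∀ p ∈ a, L.InvPair p.1 p.2) ∧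
        L.LProd (a.map Prod.fst).reverse (L.unit (L.s g)) g ∧
        L.LProd (a.map Prod.snd) (L.mul g h) h) ∨
    (∃ b : List (G × G), (∀ p ∈ b, L.InvPair p.1 p.2) ∧
        L.RProd (L.unit (L.t h)) (b.map Prod.fst) h ∧
        L.RProd (L.mul g h) (b.map Prod.snd).reverse g)

/-- An associator at `x`: an arrow `g` with `s g = t g = x` such that some
well-formed word can be contracted both to `(g)` and to `(u x)`. -/
def IsAssociator (x : M) (g : G) : Prop :=
  L.s g = x ∧ L.t g = x ∧
    ∃ w, L.WFWord w ∧ L.ContractsTo w [g] ∧ L.ContractsTo w [L.unit x]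

/-- An arrow is inversional if it is a well-defined product of invertible elements. -/
def Inversional (g : G) : Prop :=
  ∃ w : List G, L.WFWord w ∧ (∀ a ∈ w, L.Invertible a) ∧ L.ContractsTo w [g]

/-- `EvalsTo w g`: some full bracketing of the word `w` can be evaluated (all
intermediate products being defined), with result `g`. -/
inductive EvalsTo : List G → G → Prop
  | single (g : G) : EvalsTo [g] g
  | mul {w1 w2 : List G} {g h : G} : EvalsTo w1 g → EvalsTo w2 h → L.D g h →
      EvalsTo (w1 ++ w2) (L.mul g h)

/-- Global associativity: all defined bracketings of a composable tuple agree. -/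
def GloballyAssociative : Prop := ∀ w g h, L.EvalsTo w g → L.EvalsTo w h → g = h

end LocalGroupoid

/-- A morphism of local groupoids. -/
structure IsMorphism {G₁ M₁ G₂ M₂ : Type*} (L₁ : LocalGroupoid G₁ M₁)
    (L₂ : LocalGroupoid G₂ M₂) (F : G₁ → G₂) (f : M₁ → M₂) : Prop where
  map_s : ∀ g, L₂.s (F g) = f (L₁.s g)
  map_t : ∀ g, L₂.t (F g) = f (L₁.t g)
  map_unit : ∀ x, F (L₁.unit x) = L₂.unit (f x)
  map_D : ∀ {g h}, L₁.D g h → L₂.D (F g) (F h)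
  map_mul : ∀ {g h}, L₁.D g h → F (L₁.mul g h) = L₂.mul (F g) (F h)

/-- A local groupoid is global (an honest groupoid) if multiplication is defined for
all matching pairs and every arrow is invertible. -/
structure IsGlobal {G M : Type*} (L : LocalGroupoid G M) : Prop where
  total : ∀ {g h}, L.s g = L.t h → L.D g h
  inv : ∀ g, L.Invertible g


/-!
Two one-letter words have the same class in `AC(G)` iff a zigzag of contractions and expansions
joins them; the inverse-decomposition property straightens every zigzag into a single common
expansion. The key point is that a word `B` evaluating to `x` is a contraction of `x` padded on
both sides by words contracting to identities. At a product `u v`, a telescope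
`u = aₗ(⋯(a₂ a₁))`, `v = a₁⁻¹(⋯(aₗ⁻¹ (u v)))` expands `(u v)` to `(aₗ, …, a₁, a₁⁻¹, …, aₗ⁻¹, u v)`,
whose part `aₗ ⋯ a₁ a₁⁻¹ ⋯ aₗ⁻¹` contracts to an identity; the paddings of `u` and `v` fit in
between `a₁` and `a₁⁻¹` (symmetrically for a telescope on the right). Two words evaluating to
the same `x` then share the expansion obtained by nesting their paddings around `x`. A common
expansion of `(g)` and `(h)` evaluates both to `g` and to `h`, so global associativity forces
`g = h`. Conversely, two bracketings of one word contract it to their two values, which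
therefore have the same class.
-/

theorem List.exists_of_append_eq_append_cons {α : Type*} {w₁ w₂ p q : List α} {z : α}
    (h : w₁ ++ w₂ = p ++ z :: q) :
    (∃ q₁, w₁ = p ++ z :: q₁ ∧ q = q₁ ++ w₂) ∨ (∃ p₂, w₂ = p₂ ++ z :: q ∧ p = w₁ ++ p₂) := by
  rcases List.append_eq_append_iff.1 h with ⟨p₂, hp, hw₂⟩ | ⟨c, hw₁, hc⟩
  · exact .inr ⟨p₂, hw₂, hp⟩
  · rcases List.cons_eq_append_iff.1 hc with ⟨rfl, rfl⟩ | ⟨q₁, rfl, hq⟩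
    · exact .inr ⟨[], rfl, by simpa using hw₁.symm⟩
    · exact .inl ⟨q₁, hw₁, hq⟩

namespace LocalGroupoid

variable {G M : Type*} {L : LocalGroupoid G M}

section Contractions

theorem ContractsTo.trans {a b c : List G} (h₁ : L.ContractsTo a b) (h₂ : L.ContractsTo b c) :
    L.ContractsTo a c :=
  Relation.ReflTransGen.trans h₁ h₂

theorem Contr.append_append {w w' : List G} (h : L.Contr w w') (p q : List G) :
    L.Contr (p ++ w ++ q) (p ++ w' ++ q) := by
  obtain ⟨p₀, q₀, hD⟩ := h
  simpa using Contr.mk (L := L) (p ++ p₀) (q₀ ++ q) hD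

theorem ContractsTo.append_append {w w' : List G} (h : L.ContractsTo w w') (p q : List G) :
    L.ContractsTo (p ++ w ++ q) (p ++ w' ++ q) :=
  Relation.ReflTransGen.lift (fun w => p ++ w ++ q) (fun _ _ hc => hc.append_append p q) _ _ h

theorem ContractsTo.append {a b c d : List G} (h₁ : L.ContractsTo a b) (h₂ : L.ContractsTo c d) :
    L.ContractsTo (a ++ c) (b ++ d) := by
  have h₁' : L.ContractsTo (a ++ c) (b ++ c) := by simpa using h₁.append_append [] c
  have h₂' : L.ContractsTo (b ++ c) (b ++ d) := by simpa using h₂.append_append b []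
  exact h₁'.trans h₂'

theorem contractsTo_pair {g h : G} (hD : L.D g h) : L.ContractsTo [g, h] [L.mul g h] :=
  .single (by simpa using Contr.mk (L := L) [] [] hD)

theorem contractsTo_unit_cons (g : G) : L.ContractsTo [L.unit (L.t g), g] [g] := by
  simpa only [L.unit_mul] using contractsTo_pair (L.D_unit_left g)

theorem contractsTo_cons_unit (g : G) : L.ContractsTo [g, L.unit (L.s g)] [g] := by
  simpa only [L.mul_unit_right] using contractsTo_pair (L.D_unit_right g)

theorem ContractsTo.eq_nil {w : List G} (h : L.ContractsTo w []) : w = [] := by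
  induction h using Relation.ReflTransGen.head_induction_on with
  | refl => rfl
  | head hc _ ih =>
    obtain ⟨p, q, _⟩ := hc
    simp at ih

theorem ContractsTo.exists_of_append {Z w₁ w₂ : List G} (h : L.ContractsTo Z (w₁ ++ w₂)) :
    ∃ Z₁ Z₂, Z = Z₁ ++ Z₂ ∧ L.ContractsTo Z₁ w₁ ∧ L.ContractsTo Z₂ w₂ := by
  generalize hw : w₁ ++ w₂ = w at h
  induction h using Relation.ReflTransGen.head_induction_on generalizing w₁ w₂ with
  | refl => exact ⟨w₁, w₂, hw.symm, .refl, .refl⟩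
  | head hc _ ih =>
    obtain ⟨Y₁, Y₂, hY, hY₁, hY₂⟩ := ih hw
    obtain ⟨p, q, hD⟩ := hc
    rcases List.exists_of_append_eq_append_cons hY.symm with ⟨q₁, rfl, rfl⟩ | ⟨p₂, rfl, rfl⟩
    · exact ⟨p ++ _ :: _ :: q₁, Y₂, by simp, .head (Contr.mk p q₁ hD) hY₁, hY₂⟩
    · exact ⟨Y₁, p₂ ++ _ :: _ :: q, by simp, hY₁, .head (Contr.mk p₂ q hD) hY₂⟩

end Contractions

section Evaluations

theorem EvalsTo.contractsTo {w : List G} {x : G} (h : L.EvalsTo w x) : L.ContractsTo w [x] := by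
  induction h with
  | single g => exact .refl
  | mul _ _ hD ih₁ ih₂ => exact (ih₁.append ih₂).trans (contractsTo_pair hD)

theorem EvalsTo.of_contr_mul {p q : List G} {g h x : G} (hD : L.D g h)
    (hx : L.EvalsTo (p ++ L.mul g h :: q) x) : L.EvalsTo (p ++ g :: h :: q) x := by
  generalize hw : p ++ L.mul g h :: q = w at hx
  induction hx generalizing p q with
  | single y =>
    obtain ⟨rfl, rfl, rfl⟩ : p = [] ∧ L.mul g h = y ∧ q = [] := by
      cases p <;> simp_all
    exact EvalsTo.mul (w1 := [g]) (.single g) (.single h) hD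
  | mul hx₁ hx₂ hD' ih₁ ih₂ =>
    rcases List.exists_of_append_eq_append_cons hw.symm with ⟨q₁, rfl, rfl⟩ | ⟨p₂, rfl, rfl⟩
    · simpa using (ih₁ rfl).mul hx₂ hD'
    · simpa using hx₁.mul (ih₂ rfl) hD'

theorem evalsTo_iff_contractsTo {w : List G} {x : G} : L.EvalsTo w x ↔ L.ContractsTo w [x] := by
  refine ⟨EvalsTo.contractsTo, fun h => ?_⟩
  induction h using Relation.ReflTransGen.head_induction_on with
  | refl => exact .single x
  | head hc _ ih =>
    obtain ⟨p, q, hD⟩ := hc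
    exact ih.of_contr_mul hD

theorem EvalsTo.exists_cons {w : List G} {x : G} (h : L.EvalsTo w x) :
    ∃ r rest, w = r :: rest ∧ L.t r = L.t x := by
  induction h with
  | single g => exact ⟨g, [], rfl, rfl⟩
  | mul _ _ hD ih₁ _ =>
    obtain ⟨r, rest, rfl, hr⟩ := ih₁
    exact ⟨r, rest ++ _, rfl, hr.trans (L.t_mul hD).symm⟩

theorem EvalsTo.exists_append_singleton {w : List G} {x : G} (h : L.EvalsTo w x) :
    ∃ init y, w = init ++ [y] ∧ L.s y = L.s x := by
  induction h with
  | single g => exact ⟨[], g, rfl, rfl⟩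
  | @mul w₁ _ _ _ _ _ hD _ ih₂ =>
    obtain ⟨init, y, rfl, hy⟩ := ih₂
    exact ⟨w₁ ++ init, y, by simp, hy.trans (L.s_mul hD).symm⟩

end Evaluations

section Absorption

theorem contractsTo_unit_append {V W : List G} {g : G} (hW : L.ContractsTo W [L.unit (L.t g)])
    (hV : L.ContractsTo V [g]) : L.ContractsTo (W ++ V) V := by
  obtain ⟨r, rest, rfl, hr⟩ := (evalsTo_iff_contractsTo.2 hV).exists_cons
  rw [← hr] at hW
  exact (hW.append .refl).trans ((contractsTo_unit_cons r).append .refl)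

theorem contractsTo_append_unit {V W : List G} {g : G} (hV : L.ContractsTo V [g])
    (hW : L.ContractsTo W [L.unit (L.s g)]) : L.ContractsTo (V ++ W) V := by
  obtain ⟨init, y, rfl, hy⟩ := (evalsTo_iff_contractsTo.2 hV).exists_append_singleton
  rw [← hy] at hW
  have hyW : L.ContractsTo (y :: W) [y] :=
    (ContractsTo.append (.refl : L.ContractsTo [y] [y]) hW).trans (contractsTo_cons_unit y)
  simpa using ContractsTo.append (.refl : L.ContractsTo init init) hyW

theorem contractsTo_padding {P S : List G} {x : G} (hP : L.ContractsTo P [L.unit (L.t x)])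
    (hS : L.ContractsTo S [L.unit (L.s x)]) : L.ContractsTo (P ++ x :: S) [x] :=
  (ContractsTo.append .refl (contractsTo_append_unit .refl hS)).trans
    (contractsTo_unit_append hP .refl)

end Absorption

section Telescopes

theorem LProd.contractsTo {as : List G} {seed r : G} (h : L.LProd as seed r) :
    L.ContractsTo (as ++ [seed]) [r] := by
  induction h with
  | nil g => exact .refl
  | cons a _ hD ih =>
    have ha : L.ContractsTo (a :: _) [a, _] := ContractsTo.append (.refl : L.ContractsTo [a] [a]) ih
    exact ha.trans (contractsTo_pair hD)

theorem RProd.contractsTo {seed : G} {bs : List G} {r : G} (h : L.RProd seed bs r) :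
    L.ContractsTo (seed :: bs) [r] := by
  induction h with
  | nil g => exact .refl
  | cons b hD _ ih => exact .head (by simpa using Contr.mk (L := L) [] _ hD) ih

theorem RProd.exists_of_append {l₁ l₂ : List G} {seed r : G} (h : L.RProd seed (l₁ ++ l₂) r) :
    ∃ m, L.RProd seed l₁ m ∧ L.RProd m l₂ r := by
  induction l₁ generalizing seed with
  | nil => exact ⟨seed, .nil seed, h⟩
  | cons b l₁ ih =>
    obtain _ | ⟨_, hD, h⟩ := h
    obtain ⟨m, h₁, h₂⟩ := ih h
    exact ⟨m, .cons b hD h₁, h₂⟩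

theorem InvPair.symm {a b : G} (h : L.InvPair a b) : L.InvPair b a := by
  obtain ⟨hab, hba, hmab, hmba⟩ := h
  refine ⟨hba, hab, ?_, ?_⟩
  · rw [hmba, L.D_st hab]
  · rw [hmab, L.D_st hba]

theorem InvPair.contractsTo_unit {a b : G} {W : List G} (h : L.InvPair a b)
    (hW : L.ContractsTo W [L.unit (L.s a)]) : L.ContractsTo (a :: W ++ [b]) [L.unit (L.t a)] := by
  have haW : L.ContractsTo (a :: W) [a] :=
    (ContractsTo.append (.refl : L.ContractsTo [a] [a]) hW).trans (contractsTo_cons_unit a)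
  have hab : L.ContractsTo (a :: W ++ [b]) [L.mul a b] :=
    (haW.append .refl).trans (contractsTo_pair h.1)
  rwa [h.2.2.1] at hab

theorem LProd.contractsTo_unit_of_invPair {a : List (G × G)} {σ : M} {u : G}
    (ha : ∀ p ∈ a, L.InvPair p.1 p.2) (h : L.LProd (a.map Prod.fst).reverse (L.unit σ) u) :
    L.ContractsTo ((a.map Prod.fst).reverse ++ L.unit σ :: a.map Prod.snd) [L.unit (L.t u)] := by
  induction a using List.reverseRecOn generalizing u with
  | nil =>
    cases h
    simpa [L.t_unit] using .refl
  | append_singleton a p ih =>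
    simp only [List.map_append, List.map_singleton, List.reverse_append, List.reverse_singleton,
      List.singleton_append] at h ⊢
    obtain _ | ⟨_, hu, hD⟩ := h
    have hW := ih (fun q hq => ha q (by simp [hq])) hu
    rw [← L.D_st hD] at hW
    simpa [L.t_mul hD] using (ha p (by simp)).contractsTo_unit hW

theorem RProd.contractsTo_unit_of_invPair {b : List (G × G)} {τ : M} {v : G}
    (hb : ∀ p ∈ b, L.InvPair p.1 p.2) (h : L.RProd (L.unit τ) (b.map Prod.fst) v) :
    L.ContractsTo ((b.map Prod.snd).reverse ++ L.unit τ :: b.map Prod.fst) [L.unit (L.s v)] := by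
  induction b using List.reverseRecOn generalizing v with
  | nil =>
    cases h
    simpa [L.s_unit] using .refl
  | append_singleton b p ih =>
    simp only [List.map_append, List.map_singleton] at h
    obtain ⟨m, hm, _ | ⟨_, hD, hv⟩⟩ := h.exists_of_append
    cases hv
    have hp := hb p (by simp)
    have hW := ih (fun q hq => hb q (by simp [hq])) hm
    rw [L.D_st hD, ← L.D_st hp.2.1] at hW
    have := hp.symm.contractsTo_unit hW
    rw [← L.D_st hp.1, ← L.s_mul hD] at this
    simpa using this

end Telescopes

section Padding

variable (L) in
def PaddedContractsTo (x : G) (B : List G) : Prop :=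
  ∃ P S, L.ContractsTo P [L.unit (L.t x)] ∧ L.ContractsTo S [L.unit (L.s x)] ∧
    L.ContractsTo (P ++ x :: S) B

theorem paddedContractsTo_singleton (x : G) : L.PaddedContractsTo x [x] :=
  ⟨[L.unit (L.t x)], [L.unit (L.s x)], .refl, .refl, contractsTo_padding .refl .refl⟩

theorem exists_split_of_invDecomp (hID : L.InvDecomp) {u v : G} (hD : L.D u v) :
    (∃ F I, L.ContractsTo F [u] ∧ L.ContractsTo (I ++ [L.mul u v]) [v] ∧
      L.ContractsTo (F ++ I) [L.unit (L.t u)]) ∨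
    (∃ J K, L.ContractsTo (L.mul u v :: J) [u] ∧ L.ContractsTo K [v] ∧
      L.ContractsTo (J ++ K) [L.unit (L.s v)]) := by
  -- `F` ends with the identity `1_{s u}` (and `K` starts with `1_{t v}`), so that an empty
  -- telescope, where `u` (resp. `v`) is an identity, needs no separate treatment.
  rcases hID u v hD with ⟨a, ha, hu, hv⟩ | ⟨b, hb, hv, hu⟩
  · exact .inl ⟨_, _, hu.contractsTo, hv.contractsTo, by
      simpa using hu.contractsTo_unit_of_invPair ha⟩
  · exact .inr ⟨_, _, hu.contractsTo, hv.contractsTo, hv.contractsTo_unit_of_invPair hb⟩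

theorem PaddedContractsTo.mul_of_left_split {u v : G} {B₁ B₂ F I : List G} (hD : L.D u v)
    (hF : L.ContractsTo F [u]) (hI : L.ContractsTo (I ++ [L.mul u v]) [v])
    (hFI : L.ContractsTo (F ++ I) [L.unit (L.t u)])
    (h₁ : L.PaddedContractsTo u B₁) (h₂ : L.PaddedContractsTo v B₂) :
    L.PaddedContractsTo (L.mul u v) (B₁ ++ B₂) := by
  obtain ⟨P₁, S₁, hP₁, hS₁, hB₁⟩ := h₁
  obtain ⟨P₂, S₂, hP₂, hS₂, hB₂⟩ := h₂
  rw [← L.D_st hD] at hP₂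
  have hFSP : L.ContractsTo (F ++ S₁ ++ P₂) F :=
    ((contractsTo_append_unit hF hS₁).append .refl).trans (contractsTo_append_unit hF hP₂)
  refine ⟨P₁ ++ F ++ S₁ ++ P₂ ++ I, S₂, ?_, by rwa [L.s_mul hD], ?_⟩
  · have hFI' : L.ContractsTo (P₁ ++ (F ++ S₁ ++ P₂) ++ I) (P₁ ++ [L.unit (L.t u)]) :=
      (hFSP.append_append P₁ I).trans (by simpa using hFI.append_append P₁ [])
    rw [L.t_mul hD]
    simpa using hFI'.trans (contractsTo_unit_append (by rwa [L.t_unit]) .refl)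
  · have hexp : L.ContractsTo (P₁ ++ F ++ (S₁ ++ P₂) ++ (I ++ [L.mul u v]) ++ S₂)
        (P₁ ++ [u] ++ (S₁ ++ P₂) ++ [v] ++ S₂) :=
      ((((ContractsTo.append .refl hF).append .refl).append hI).append .refl)
    have hB : L.ContractsTo (P₁ ++ [u] ++ (S₁ ++ P₂) ++ [v] ++ S₂) (B₁ ++ B₂) := by
      simpa using hB₁.append hB₂
    simpa using hexp.trans hB

theorem PaddedContractsTo.mul_of_right_split {u v : G} {B₁ B₂ J K : List G} (hD : L.D u v)
    (hJ : L.ContractsTo (L.mul u v :: J) [u]) (hK : L.ContractsTo K [v])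
    (hJK : L.ContractsTo (J ++ K) [L.unit (L.s v)])
    (h₁ : L.PaddedContractsTo u B₁) (h₂ : L.PaddedContractsTo v B₂) :
    L.PaddedContractsTo (L.mul u v) (B₁ ++ B₂) := by
  obtain ⟨P₁, S₁, hP₁, hS₁, hB₁⟩ := h₁
  obtain ⟨P₂, S₂, hP₂, hS₂, hB₂⟩ := h₂
  rw [L.D_st hD] at hS₁
  have hSPK : L.ContractsTo (S₁ ++ (P₂ ++ K)) K :=
    (ContractsTo.append .refl (contractsTo_unit_append hP₂ hK)).trans
      (contractsTo_unit_append hS₁ hK)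
  refine ⟨P₁, J ++ S₁ ++ P₂ ++ K ++ S₂, by rwa [L.t_mul hD], ?_, ?_⟩
  · have hJK' : L.ContractsTo (J ++ (S₁ ++ (P₂ ++ K)) ++ S₂) ([L.unit (L.s v)] ++ S₂) :=
      (hSPK.append_append J S₂).trans (by simpa using hJK.append_append [] S₂)
    rw [L.s_mul hD]
    simpa using hJK'.trans (contractsTo_append_unit .refl (by rwa [L.s_unit]))
  · have hexp : L.ContractsTo (P₁ ++ (L.mul u v :: J) ++ (S₁ ++ P₂) ++ K ++ S₂)
        (P₁ ++ [u] ++ (S₁ ++ P₂) ++ [v] ++ S₂) :=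
      ((((ContractsTo.append .refl hJ).append .refl).append hK).append .refl)
    have hB : L.ContractsTo (P₁ ++ [u] ++ (S₁ ++ P₂) ++ [v] ++ S₂) (B₁ ++ B₂) := by
      simpa using hB₁.append hB₂
    simpa using hexp.trans hB

theorem EvalsTo.paddedContractsTo (hID : L.InvDecomp) {B : List G} {x : G}
    (h : L.EvalsTo B x) : L.PaddedContractsTo x B := by
  induction h with
  | single g => exact paddedContractsTo_singleton g
  | mul _ _ hD ih₁ ih₂ =>
    rcases exists_split_of_invDecomp hID hD with ⟨F, I, hF, hI, hFI⟩ | ⟨J, K, hJ, hK, hJK⟩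
    · exact ih₁.mul_of_left_split hD hF hI hFI ih₂
    · exact ih₁.mul_of_right_split hD hJ hK hJK ih₂

end Padding

section CommonExpansions

theorem join_of_evalsTo (hID : L.InvDecomp) {A C : List G} {x : G} (hA : L.EvalsTo A x)
    (hC : L.EvalsTo C x) : Relation.Join (flip L.ContractsTo) A C := by
  obtain ⟨Pa, Sa, hPa, hSa, hA⟩ := hA.paddedContractsTo hID
  obtain ⟨Pc, Sc, hPc, hSc, hC⟩ := hC.paddedContractsTo hID
  have hV := contractsTo_padding hPc hSc
  refine ⟨Pa ++ (Pc ++ x :: Sc) ++ Sa, ?_, ?_⟩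
  · have hx : L.ContractsTo (Pa ++ (Pc ++ x :: Sc) ++ Sa) (Pa ++ [x] ++ Sa) :=
      (ContractsTo.append .refl hV).append .refl
    exact hx.trans (by simpa using hA)
  · exact (((contractsTo_unit_append hPa hV).append .refl).trans
      (contractsTo_append_unit hV hSa)).trans hC

theorem join_of_contractsTo (hID : L.InvDecomp) {w Z₁ Z₂ : List G} (h₁ : L.ContractsTo Z₁ w)
    (h₂ : L.ContractsTo Z₂ w) : Relation.Join (flip L.ContractsTo) Z₁ Z₂ := by
  induction w generalizing Z₁ Z₂ with
  | nil =>
    rw [h₁.eq_nil, h₂.eq_nil]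
    exact ⟨[], .refl, .refl⟩
  | cons x w ih =>
    obtain ⟨A₁, T₁, rfl, hA₁, hT₁⟩ := h₁.exists_of_append (w₁ := [x])
    obtain ⟨A₂, T₂, rfl, hA₂, hT₂⟩ := h₂.exists_of_append (w₁ := [x])
    obtain ⟨A, hA⟩ := join_of_evalsTo hID (evalsTo_iff_contractsTo.2 hA₁)
      (evalsTo_iff_contractsTo.2 hA₂)
    obtain ⟨T, hT⟩ := ih hT₁ hT₂
    exact ⟨A ++ T, hA.1.append hT.1, hA.2.append hT.2⟩

theorem equivalence_join_contractsTo (hID : L.InvDecomp) :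
    Equivalence (Relation.Join (flip L.ContractsTo)) where
  refl w := ⟨w, .refl, .refl⟩
  symm := fun ⟨Z, h₁, h₂⟩ => ⟨Z, h₂, h₁⟩
  trans := fun ⟨_, h₁, h₁'⟩ ⟨_, h₂, h₂'⟩ =>
    let ⟨Z, hZ₁, hZ₂⟩ := join_of_contractsTo hID h₁' h₂
    ⟨Z, hZ₁.trans h₁, hZ₂.trans h₂'⟩

theorem join_of_wordEquiv (hID : L.InvDecomp) {w w' : List G} (h : L.WordEquiv w w') :
    Relation.Join (flip L.ContractsTo) w w' :=
  (equivalence_join_contractsTo hID).eqvGen_iff.1 <|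
    Relation.EqvGen.mono (fun _ _ hc => ⟨_, .refl, .single hc⟩) _ _ h

theorem wordEquiv_of_join {w w' : List G} (h : Relation.Join (flip L.ContractsTo) w w') :
    L.WordEquiv w w' :=
  let ⟨_, h₁, h₂⟩ := h
  .trans _ _ _ (.symm _ _ (Relation.EqvGen.reflTransGen_le_eqvGen _ _ _ h₁))
    (Relation.EqvGen.reflTransGen_le_eqvGen _ _ _ h₂)

end CommonExpansions

end LocalGroupoid

/-- If a local groupoid is globally associative (all defined
bracketings of any composable tuple agree) and satisfies the inverse-decomposition
property, then the completion map `G → AC(G)` is injective; conversely, if the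
completion map is injective then the local groupoid is globally associative. -/
theorem globallyAssociative_iff_completion_injective {G M : Type*}
    (L : LocalGroupoid G M) :
    ((L.GloballyAssociative ∧ L.InvDecomp) → Function.Injective L.completion) ∧
    (Function.Injective L.completion → L.GloballyAssociative) := by
  constructor
  · rintro ⟨hGA, hID⟩ g h hgh
    obtain ⟨Z, hg, hh⟩ := L.join_of_wordEquiv hID (Quotient.exact hgh)
    exact hGA Z g h (L.evalsTo_iff_contractsTo.2 hg) (L.evalsTo_iff_contractsTo.2 hh)
  · intro hinj w g h hg hh
    exact hinj (Quotient.sound (L.wordEquiv_of_join ⟨w, hg.contractsTo, hh.contractsTo⟩))
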